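/- arXiv:1808.01351 — 3 statements merged into one kernel-verified Lean document; each statement's English description precedes it below -/
import Mathlib

section
/- The following are equivalent: (1) 𝒯 is non-discriminatory; (2) 𝒯 is non-discriminatory for binary sets; (3) 𝒯 is identified; (4) 𝒯 admits fair valuations; (5) 𝒯 admits fair valuations for binary sets. -/
open MeasureTheory Set

section Defs

variable {Θ : Type*} [Fintype Θ]

/-- The value function `v_A(s) = max_{a ∈ A} ∑_θ a(θ) s(θ)`. -/
noncomputable def valueFn (A : Set (Θ → ℝ)) (s : Θ → ℝ) : ℝ :=
  sSup ((fun a => ∑ θ, a θ * s θ) '' A)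

/-- A binary set: one or two elements. -/
def Binary (A : Set (Θ → ℝ)) : Prop := A.ncard = 1 ∨ A.ncard = 2

/-- An information structure on `S`: a Borel probability measure supported on `S`. -/
def IsInfoStructure (S : Set (Θ → ℝ)) (π : Measure (Θ → ℝ)) : Prop :=
  IsProbabilityMeasure π ∧ π Sᶜ = 0

/-- The skill distribution `p_π(θ) = ∫_S s(θ) dπ(s)` induced by `π`. -/
noncomputable def skillDist (S : Set (Θ → ℝ)) (π : Measure (Θ → ℝ)) : Θ → ℝ :=
  fun θ => ∫ s in S, s θ ∂π

/-- `S` is non-discriminatory. -/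
def NonDiscriminatory (S : Set (Θ → ℝ)) : Prop :=
  ∀ π π' : Measure (Θ → ℝ), IsInfoStructure S π → IsInfoStructure S π' →
    ∀ A : Set (Θ → ℝ), A.Finite → A.Nonempty →
      skillDist S π = skillDist S π' →
      ∫ t in S, valueFn A t ∂π = ∫ t in S, valueFn A t ∂π'

/-- `S` is non-discriminatory for binary sets. -/
def NonDiscriminatoryBinary (S : Set (Θ → ℝ)) : Prop :=
  ∀ π π' : Measure (Θ → ℝ), IsInfoStructure S π → IsInfoStructure S π' →
    ∀ A : Set (Θ → ℝ), Binary A →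
      skillDist S π = skillDist S π' →
      ∫ t in S, valueFn A t ∂π = ∫ t in S, valueFn A t ∂π'

/-- `S` is identified. -/
def Identified (S : Set (Θ → ℝ)) : Prop :=
  ∀ π π' : Measure (Θ → ℝ), IsInfoStructure S π → IsInfoStructure S π' →
    skillDist S π = skillDist S π' → π = π'

/-- `S` admits fair valuations. -/
def FairValuations (S : Set (Θ → ℝ)) : Prop :=
  ∀ A : Set (Θ → ℝ), A.Finite → A.Nonempty →
    ∃ α : Θ → ℝ, ∀ t ∈ S, valueFn A t = ∑ θ, α θ * t θ

/-- `S` admits fair valuations for binary sets. -/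
def FairValuationsBinary (S : Set (Θ → ℝ)) : Prop :=
  ∀ A : Set (Θ → ℝ), Binary A →
    ∃ α : Θ → ℝ, ∀ t ∈ S, valueFn A t = ∑ θ, α θ * t θ

/-- `W_A(p)`: value of optimal information design with skill distribution `p`,
over information structures on `S`. -/
noncomputable def Wfn (A S : Set (Θ → ℝ)) (p : Θ → ℝ) : ℝ :=
  sSup {x | ∃ π : Measure (Θ → ℝ), IsInfoStructure S π ∧ skillDist S π = p ∧
    x = ∫ t in S, valueFn A t ∂π}

/-- A function is affine on `T`. -/
def AffineOnSet (W : (Θ → ℝ) → ℝ) (T : Set (Θ → ℝ)) : Prop :=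
  ∀ p ∈ T, ∀ q ∈ T, ∀ γ : ℝ, 0 ≤ γ → γ ≤ 1 →
    W (γ • p + (1 - γ) • q) = γ * W p + (1 - γ) * W q

end Defs

/-!
All five conditions are equivalent to linear independence of `𝒯`. If `𝒯` is linearly
independent, every function on `𝒯` (a value function, an indicator) is the restriction of a
linear functional `t ↦ α ⬝ᵥ t`, whose expectation `α ⬝ᵥ p_π` only depends on the skill
distribution. Conversely, a nontrivial relation `∑ c_t t = 0` among points of the simplex has
`∑ c_t = 0`, so the normalised positive and negative parts of `c` are two information
structures with the same skill distribution; each of the conditions (2), (3), (5) then forces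
`∑ c_t max (d ⬝ᵥ t) 0 = 0` for every `d`. Taking `t₀` of maximal norm in the support of `c`
and `d = t₀ - fun _ => r` with `r` just below `t₀ ⬝ᵥ t₀`, only `t₀` lies on the positive side
of this hinge, so `c_{t₀} = 0`.
-/

section WeightedDirac

variable {α : Type*} [MeasurableSpace α] [MeasurableSingletonClass α]

noncomputable def weightedDirac (F : Finset α) (w : α → ℝ) : Measure α :=
  ∑ t ∈ F, ENNReal.ofReal (w t) • Measure.dirac t

theorem weightedDirac_apply (F : Finset α) (w : α → ℝ) (s : Set α) :
    weightedDirac F w s = ∑ t ∈ F, ENNReal.ofReal (w t) * s.indicator 1 t := by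
  simp only [weightedDirac, Measure.finsetSum_apply, Measure.smul_apply, Measure.dirac_apply,
    smul_eq_mul]

theorem isProbabilityMeasure_weightedDirac {F : Finset α} {w : α → ℝ} (hw : ∀ t ∈ F, 0 ≤ w t)
    (hw₁ : ∑ t ∈ F, w t = 1) : IsProbabilityMeasure (weightedDirac F w) :=
  ⟨by simp [weightedDirac_apply, ← ENNReal.ofReal_sum_of_nonneg hw, hw₁]⟩

theorem weightedDirac_compl_eq_zero {F : Finset α} {S : Set α} (hF : ↑F ⊆ S) (w : α → ℝ) :
    weightedDirac F w Sᶜ = 0 :=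
  (weightedDirac_apply F w _).trans <| Finset.sum_eq_zero fun t ht => by simp [hF ht]

theorem integral_weightedDirac {F : Finset α} {w : α → ℝ} (hw : ∀ t ∈ F, 0 ≤ w t) (f : α → ℝ) :
    ∫ x, f x ∂weightedDirac F w = ∑ t ∈ F, w t * f t := by
  rw [weightedDirac, integral_finsetSum_measure fun t _ =>
    (integrable_dirac (by simp)).smul_measure ENNReal.ofReal_ne_top]
  refine Finset.sum_congr rfl fun t ht => ?_
  rw [integral_smul_measure, integral_dirac, ENNReal.toReal_ofReal (hw t ht), smul_eq_mul]

end WeightedDirac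

section RespectsLinearRelations

variable {R M : Type*} [Semiring R] [AddCommMonoid M] [Module R M]

def RespectsLinearRelations (S : Set M) (v : M → R) : Prop :=
  ∀ c ∈ Finsupp.supported R R S, Finsupp.linearCombination R id c = 0 →
    Finsupp.linearCombination R v c = 0

theorem RespectsLinearRelations.congr {S : Set M} {v w : M → R}
    (h : RespectsLinearRelations S v) (hvw : EqOn v w S) : RespectsLinearRelations S w := by
  intro c hc hc₀
  have : Finsupp.linearCombination R w c = Finsupp.linearCombination R v c := by
    simp only [Finsupp.linearCombination_apply, Finsupp.sum]
    exact Finset.sum_congr rfl fun t ht => by rw [hvw (hc ht)]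
  rw [this]
  exact h c hc hc₀

theorem LinearMap.respectsLinearRelations (f : M →ₗ[R] R) (S : Set M) :
    RespectsLinearRelations S f := by
  intro c _ hc
  rw [← Finsupp.apply_linearCombination_id, hc, map_zero]

end RespectsLinearRelations

section InfoStructure

variable {Θ : Type*}

theorem binary_pair (a b : Θ → ℝ) : Binary {a, b} := by
  rcases eq_or_ne a b with rfl | h
  · exact Or.inl (by simp)
  · exact Or.inr (Set.ncard_pair h)

theorem Binary.finite {A : Set (Θ → ℝ)} (h : Binary A) : A.Finite :=
  Set.finite_of_ncard_ne_zero (by rcases h with h | h <;> simp [h])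

theorem Binary.nonempty {A : Set (Θ → ℝ)} (h : Binary A) : A.Nonempty :=
  Set.nonempty_of_ncard_ne_zero (by rcases h with h | h <;> simp [h])

theorem IsInfoStructure.restrict_eq {S : Set (Θ → ℝ)} {π : Measure (Θ → ℝ)}
    (hπ : IsInfoStructure S π) : π.restrict S = π :=
  Measure.restrict_eq_self_of_ae_mem (ae_iff.mpr hπ.2)

variable [Fintype Θ]

theorem valueFn_pair (a b s : Θ → ℝ) : valueFn {a, b} s = max (a ⬝ᵥ s) (b ⬝ᵥ s) := by
  rw [valueFn, Set.image_pair, csSup_pair]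
  rfl

theorem isInfoStructure_weightedDirac {S : Set (Θ → ℝ)} {F : Finset (Θ → ℝ)} {w : (Θ → ℝ) → ℝ}
    (hF : ↑F ⊆ S) (hw : ∀ t ∈ F, 0 ≤ w t) (hw₁ : ∑ t ∈ F, w t = 1) :
    IsInfoStructure S (weightedDirac F w) :=
  ⟨isProbabilityMeasure_weightedDirac hw hw₁, weightedDirac_compl_eq_zero hF w⟩

theorem setIntegral_weightedDirac {S : Set (Θ → ℝ)} {F : Finset (Θ → ℝ)} {w : (Θ → ℝ) → ℝ}
    (hF : ↑F ⊆ S) (hw : ∀ t ∈ F, 0 ≤ w t) (v : (Θ → ℝ) → ℝ) :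
    ∫ t in S, v t ∂weightedDirac F w = ∑ t ∈ F, w t * v t := by
  rw [Measure.restrict_eq_self_of_ae_mem (ae_iff.mpr (weightedDirac_compl_eq_zero hF w)),
    integral_weightedDirac hw]

theorem setIntegral_eq_dotProduct_skillDist {𝒯 : Set (Θ → ℝ)} (h𝒯 : IsCompact 𝒯)
    (π : Measure (Θ → ℝ)) [IsFiniteMeasure π] {v : (Θ → ℝ) → ℝ} {α : Θ → ℝ}
    (hv : ∀ t ∈ 𝒯, v t = α ⬝ᵥ t) :
    ∫ t in 𝒯, v t ∂π = α ⬝ᵥ skillDist 𝒯 π := by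
  simp only [setIntegral_congr_fun h𝒯.measurableSet hv, dotProduct]
  rw [integral_finsetSum _ fun θ _ =>
    (by fun_prop : Continuous fun t : Θ → ℝ => α θ * t θ).continuousOn.integrableOn_compact h𝒯]
  exact Finset.sum_congr rfl fun θ _ => integral_const_mul _ _

theorem FairValuations.nonDiscriminatory {𝒯 : Set (Θ → ℝ)} (h𝒯 : IsCompact 𝒯)
    (h : FairValuations 𝒯) : NonDiscriminatory 𝒯 := by
  intro π π' hπ hπ' A hA hA' hp
  obtain ⟨α, hα⟩ := h A hA hA'
  have := hπ.1
  have := hπ'.1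
  rw [setIntegral_eq_dotProduct_skillDist h𝒯 π hα, setIntegral_eq_dotProduct_skillDist h𝒯 π' hα,
    hp]

theorem LinearIndepOn.exists_dotProduct_eq {𝒯 : Set (Θ → ℝ)} (h : LinearIndepOn ℝ id 𝒯)
    (v : (Θ → ℝ) → ℝ) : ∃ α : Θ → ℝ, ∀ t ∈ 𝒯, v t = α ⬝ᵥ t := by
  classical
  let ℓ := (Module.Basis.extend h).constr ℝ fun t => v t
  refine ⟨fun θ => ℓ fun j => if θ = j then 1 else 0, fun t ht => ?_⟩
  have hℓ : ℓ t = v t := by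
    have := (Module.Basis.extend h).constr_basis ℝ (fun t => v t) ⟨t, h.subset_extend _ ht⟩
    rwa [Module.Basis.extend_apply_self] at this
  simp [← hℓ, ℓ.pi_apply_eq_sum_univ t, dotProduct, mul_comm]

theorem LinearIndepOn.fairValuations {𝒯 : Set (Θ → ℝ)} (h : LinearIndepOn ℝ id 𝒯) :
    FairValuations 𝒯 :=
  fun A _ _ => h.exists_dotProduct_eq (valueFn A)

theorem LinearIndepOn.identified {𝒯 : Set (Θ → ℝ)} (h𝒯 : IsCompact 𝒯)
    (h : LinearIndepOn ℝ id 𝒯) : Identified 𝒯 := by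
  intro π π' hπ hπ' hp
  have := hπ.1
  have := hπ'.1
  ext s hs
  obtain ⟨α, hα⟩ := h.exists_dotProduct_eq (s.indicator 1)
  have hreal : π.real s = π'.real s := calc
    π.real s = ∫ t in 𝒯, s.indicator 1 t ∂π := by rw [hπ.restrict_eq, integral_indicator_one hs]
    _ = α ⬝ᵥ skillDist 𝒯 π := setIntegral_eq_dotProduct_skillDist h𝒯 π hα
    _ = α ⬝ᵥ skillDist 𝒯 π' := by rw [hp]
    _ = ∫ t in 𝒯, s.indicator 1 t ∂π' := (setIntegral_eq_dotProduct_skillDist h𝒯 π' hα).symm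
    _ = π'.real s := by rw [hπ'.restrict_eq, integral_indicator_one hs]
  exact (ENNReal.toReal_eq_toReal_iff' (measure_ne_top π s) (measure_ne_top π' s)).mp hreal

end InfoStructure

section LinearIndependence

open Filter Topology

variable {Θ : Type*} [Fintype Θ]

theorem Finsupp.eq_zero_of_linearCombination_max_dotProduct_eq_zero {c : (Θ → ℝ) →₀ ℝ}
    (hc : ∀ t ∈ c.support, ∑ θ, t θ = 1)
    (h : ∀ d : Θ → ℝ, Finsupp.linearCombination ℝ (fun t => max (d ⬝ᵥ t) 0) c = 0) : c = 0 := by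
  by_contra hc₀
  obtain ⟨t₀, ht₀, hmax⟩ :=
    c.support.exists_max_image (fun t => t ⬝ᵥ t) (Finsupp.support_nonempty_iff.2 hc₀)
  have hlt : ∀ t ∈ c.support.erase t₀, t₀ ⬝ᵥ t < t₀ ⬝ᵥ t₀ := by
    intro t ht
    obtain ⟨hne, ht⟩ := Finset.mem_erase.1 ht
    have hpos : 0 < (t - t₀) ⬝ᵥ (t - t₀) :=
      (Fintype.sum_nonneg fun _ => mul_self_nonneg _).lt_of_ne'
        (mt dotProduct_self_eq_zero.1 (sub_ne_zero.2 hne))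
    simp only [sub_dotProduct, dotProduct_sub, dotProduct_comm t t₀] at hpos
    linarith [hmax t ht]
  have hr : ∀ᶠ r in 𝓝[<] (t₀ ⬝ᵥ t₀), (∀ t ∈ c.support.erase t₀, t₀ ⬝ᵥ t < r) ∧ r < t₀ ⬝ᵥ t₀ :=
    ((c.support.erase t₀).eventually_all.2 fun t ht =>
      nhdsWithin_le_nhds (lt_mem_nhds (hlt t ht))).and self_mem_nhdsWithin
  obtain ⟨r, hr, hr₀⟩ := hr.exists
  have hd : ∀ t ∈ c.support, (t₀ - fun _ => r) ⬝ᵥ t = t₀ ⬝ᵥ t - r := fun t ht => by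
    simp only [dotProduct, Pi.sub_apply, sub_mul, Finset.sum_sub_distrib, ← Finset.mul_sum,
      hc t ht, mul_one]
  have := h (t₀ - fun _ => r)
  rw [Finsupp.linearCombination_apply, Finsupp.sum, Finset.sum_eq_single_of_mem t₀ ht₀] at this
  · rw [hd t₀ ht₀, max_eq_left (by linarith), smul_eq_mul] at this
    exact (mul_ne_zero (Finsupp.mem_support_iff.1 ht₀) (by linarith)) this
  · intro t ht hne
    rw [hd t ht, max_eq_right (by linarith [hr t (Finset.mem_erase.2 ⟨hne, ht⟩)]), smul_zero]

theorem linearIndepOn_of_respectsLinearRelations_valueFn {𝒯 : Set (Θ → ℝ)}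
    (h𝒯 : ∀ t ∈ 𝒯, ∑ θ, t θ = 1)
    (h : ∀ A, Binary A → RespectsLinearRelations 𝒯 (valueFn A)) : LinearIndepOn ℝ id 𝒯 := by
  refine linearIndepOn_iff.2 fun c hc hc₀ =>
    c.eq_zero_of_linearCombination_max_dotProduct_eq_zero (fun t ht => h𝒯 t (hc ht)) fun d => ?_
  have hv : valueFn {d, 0} = fun t => max (d ⬝ᵥ t) 0 := by
    funext t
    simp [valueFn_pair]
  exact hv ▸ h _ (binary_pair d 0) c hc hc₀

theorem respectsLinearRelations_of_setIntegral_eq {𝒯 : Set (Θ → ℝ)}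
    (h𝒯 : ∀ t ∈ 𝒯, ∑ θ, t θ = 1) {v : (Θ → ℝ) → ℝ}
    (hv : ∀ π π', IsInfoStructure 𝒯 π → IsInfoStructure 𝒯 π' →
      skillDist 𝒯 π = skillDist 𝒯 π' → ∫ t in 𝒯, v t ∂π = ∫ t in 𝒯, v t ∂π') :
    RespectsLinearRelations 𝒯 v := by
  intro c hc𝒯 hc
  rcases eq_or_ne c 0 with rfl | hc₀
  · exact map_zero _
  set F := c.support
  have hF : ↑F ⊆ 𝒯 := hc𝒯
  have hcoord : ∀ θ, ∑ t ∈ F, c t * t θ = 0 := fun θ => by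
    simpa [Finsupp.linearCombination_apply, Finsupp.sum] using congrFun hc θ
  have hsum : ∑ t ∈ F, c t = 0 := calc
    ∑ t ∈ F, c t = ∑ θ, ∑ t ∈ F, c t * t θ := by
      rw [Finset.sum_comm]
      exact Finset.sum_congr rfl fun t ht => by rw [← Finset.mul_sum, h𝒯 t (hF ht), mul_one]
    _ = 0 := Finset.sum_eq_zero fun θ _ => hcoord θ
  set S := ∑ t ∈ F, |c t|
  have hS : 0 < S := Finset.sum_pos (fun t ht => abs_pos.2 (Finsupp.mem_support_iff.1 ht))
    (Finsupp.support_nonempty_iff.2 hc₀)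
  -- `c = (S / 2) • (w 1 - w (-1))`, where `w (±1)` are probability weights on `F`
  let w : ℝ → (Θ → ℝ) → ℝ := fun σ t => (|c t| + σ * c t) / S
  have hw : ∀ σ (g : (Θ → ℝ) → ℝ),
      ∑ t ∈ F, w σ t * g t = (∑ t ∈ F, |c t| * g t + σ * ∑ t ∈ F, c t * g t) / S := by
    intro σ g
    simp only [w, div_mul_eq_mul_div, ← Finset.sum_div, add_mul, Finset.sum_add_distrib,
      Finset.mul_sum, mul_assoc]
  have hinfo : ∀ σ : ℝ, |σ| ≤ 1 → IsInfoStructure 𝒯 (weightedDirac F (w σ)) ∧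
      ∀ g : (Θ → ℝ) → ℝ, ∫ t in 𝒯, g t ∂weightedDirac F (w σ) = ∑ t ∈ F, w σ t * g t := by
    intro σ hσ
    have hnonneg : ∀ t ∈ F, 0 ≤ w σ t := fun t _ => by
      have := neg_abs_le (σ * c t)
      rw [abs_mul] at this
      exact div_nonneg (by nlinarith [abs_nonneg (c t)]) hS.le
    refine ⟨isInfoStructure_weightedDirac hF hnonneg ?_, setIntegral_weightedDirac hF hnonneg⟩
    have := hw σ 1
    simp only [Pi.one_apply, mul_one, hsum, mul_zero, add_zero] at this
    exact this.trans (div_self hS.ne')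
  obtain ⟨hπ, hπv⟩ := hinfo 1 (by norm_num)
  obtain ⟨hπ', hπ'v⟩ := hinfo (-1) (by norm_num)
  have hp : skillDist 𝒯 (weightedDirac F (w 1)) = skillDist 𝒯 (weightedDirac F (w (-1))) := by
    funext θ
    simp only [skillDist, hπv, hπ'v, hw, hcoord, mul_zero]
  have := hv _ _ hπ hπ' hp
  rw [hπv, hπ'v, hw, hw, div_left_inj' hS.ne'] at this
  simp only [Finsupp.linearCombination_apply, Finsupp.sum, smul_eq_mul]
  linarith

theorem FairValuationsBinary.linearIndepOn {𝒯 : Set (Θ → ℝ)} (h𝒯 : ∀ t ∈ 𝒯, ∑ θ, t θ = 1)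
    (h : FairValuationsBinary 𝒯) : LinearIndepOn ℝ id 𝒯 :=
  linearIndepOn_of_respectsLinearRelations_valueFn h𝒯 fun A hA => by
    obtain ⟨α, hα⟩ := h A hA
    exact ((dotProductBilin ℝ ℝ α).respectsLinearRelations 𝒯).congr
      fun t ht => (hα t ht).symm

theorem NonDiscriminatoryBinary.linearIndepOn {𝒯 : Set (Θ → ℝ)}
    (h𝒯 : ∀ t ∈ 𝒯, ∑ θ, t θ = 1) (h : NonDiscriminatoryBinary 𝒯) : LinearIndepOn ℝ id 𝒯 :=
  linearIndepOn_of_respectsLinearRelations_valueFn h𝒯 fun A hA =>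
    respectsLinearRelations_of_setIntegral_eq h𝒯 fun π π' hπ hπ' hp => h π π' hπ hπ' A hA hp

theorem Identified.linearIndepOn {𝒯 : Set (Θ → ℝ)} (h𝒯 : ∀ t ∈ 𝒯, ∑ θ, t θ = 1)
    (h : Identified 𝒯) : LinearIndepOn ℝ id 𝒯 :=
  linearIndepOn_of_respectsLinearRelations_valueFn h𝒯 fun _ _ =>
    respectsLinearRelations_of_setIntegral_eq h𝒯 fun π π' hπ hπ' hp => by rw [h π π' hπ hπ' hp]

end LinearIndependence

variable {Θ : Type*} [Fintype Θ] [Nonempty Θ]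

theorem stmt1 (𝒯 : Set (Θ → ℝ)) (h𝒯 : 𝒯 ⊆ stdSimplex ℝ Θ) (h𝒯c : IsClosed 𝒯) :
    List.TFAE [NonDiscriminatory 𝒯, NonDiscriminatoryBinary 𝒯, Identified 𝒯,
      FairValuations 𝒯, FairValuationsBinary 𝒯] := by
  have hsum : ∀ t ∈ 𝒯, ∑ θ, t θ = 1 := fun t ht => (h𝒯 ht).2
  have hcpt : IsCompact 𝒯 := (isCompact_stdSimplex ℝ Θ).of_isClosed_subset h𝒯c h𝒯
  tfae_have 1 → 2 := fun h π π' hπ hπ' A hA => h π π' hπ hπ' A hA.finite hA.nonempty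
  tfae_have 2 → 3 := fun h => (h.linearIndepOn hsum).identified hcpt
  tfae_have 3 → 4 := fun h => (h.linearIndepOn hsum).fairValuations
  tfae_have 4 → 1 := fun h => h.nonDiscriminatory hcpt
  tfae_have 4 → 5 := fun h A hA => h A hA.finite hA.nonempty
  tfae_have 5 → 3 := fun h => (h.linearIndepOn hsum).identified hcpt
  tfae_finish
end

section
/- If 𝒯 is non-discriminatory for binary sets, then 𝒯 is identified. -/
open MeasureTheory Set

section Aux

set_option linter.unusedSectionVars false

variable {Θ : Type*} [Fintype Θ]

/-! ### A linear functional avoiding finitely many hyperplanes -/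

private lemma aux_sep_aux (D : Finset (Θ → ℝ)) (hD : ∀ d ∈ D, d ≠ 0) :
    ∃ c : Θ → ℝ, ∀ d ∈ D, ∑ θ, c θ * d θ ≠ 0 := by
  classical
  induction D using Finset.induction with
  | empty => exact ⟨0, by simp⟩
  | @insert d₀ D hd₀ ih =>
    obtain ⟨c, hc⟩ := ih (fun d hd => hD d (Finset.mem_insert_of_mem hd))
    have hd₀0 : d₀ ≠ 0 := hD d₀ (Finset.mem_insert_self _ _)
    have hdd : (0:ℝ) < ∑ θ, d₀ θ * d₀ θ := by
      rcases (lt_or_eq_of_le (Finset.sum_nonneg fun θ _ => mul_self_nonneg (d₀ θ))) with h | h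
      · exact h
      · exfalso; apply hd₀0; funext θ
        have := (Finset.sum_eq_zero_iff_of_nonneg (fun θ _ => mul_self_nonneg (d₀ θ))).1
          h.symm θ (Finset.mem_univ θ)
        simpa [mul_self_eq_zero] using this
    set bad : (Θ → ℝ) → ℝ := fun d => -(∑ θ, c θ * d θ) / (∑ θ, d₀ θ * d θ) with hbad
    obtain ⟨ε, hε⟩ := Infinite.exists_notMem_finset ((insert d₀ D).image bad)
    refine ⟨fun θ => c θ + ε * d₀ θ, ?_⟩
    intro d hd
    have hexp : ∑ θ, (c θ + ε * d₀ θ) * d θ = (∑ θ, c θ * d θ) + ε * ∑ θ, d₀ θ * d θ := by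
      rw [Finset.mul_sum]; rw [← Finset.sum_add_distrib]; congr 1; funext θ; ring
    rw [hexp]
    by_cases hz : (∑ θ, d₀ θ * d θ) = 0
    · rcases Finset.mem_insert.1 hd with rfl | hdD
      · exact absurd hz (ne_of_gt hdd)
      · simpa [hz] using hc d hdD
    · intro heq
      apply hε
      refine Finset.mem_image.2 ⟨d, hd, ?_⟩
      rw [hbad]
      field_simp
      linarith

private lemma aux_sep_fn (F : Finset (Θ → ℝ)) :
    ∃ c : Θ → ℝ, ∀ t ∈ F, ∀ t' ∈ F, (∑ θ, c θ * t θ) = (∑ θ, c θ * t' θ) → t = t' := by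
  classical
  set D := ((F ×ˢ F).filter (fun p => p.1 ≠ p.2)).image (fun p => p.1 - p.2) with hD
  obtain ⟨c, hc⟩ := aux_sep_aux D (by
    intro d hd
    simp only [hD, Finset.mem_image, Finset.mem_filter, Finset.mem_product] at hd
    obtain ⟨p, ⟨⟨-, -⟩, hne⟩, rfl⟩ := hd
    exact sub_ne_zero.2 hne)
  refine ⟨c, ?_⟩
  intro t ht t' ht' heq
  by_contra hne
  apply hc (t - t') (by
    simp only [hD, Finset.mem_image, Finset.mem_filter, Finset.mem_product]
    exact ⟨(t, t'), ⟨⟨ht, ht'⟩, hne⟩, rfl⟩)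
  have : ∀ θ, c θ * (t - t') θ = c θ * t θ - c θ * t' θ := by
    intro θ; simp [Pi.sub_apply]; ring
  simp only [this, Finset.sum_sub_distrib, heq, sub_self]

/-! ### The second-difference argument for ReLU moments -/

private lemma aux_relu_zero (F : Finset (Θ → ℝ)) (ν : (Θ → ℝ) → ℝ) (X : (Θ → ℝ) → ℝ)
    (hinj : ∀ t ∈ F, ∀ t' ∈ F, X t = X t' → t = t')
    (hrel : ∀ r : ℝ, ∑ t ∈ F, ν t * max (X t - r) 0 = 0) :
    ∀ t ∈ F, ν t = 0 := by
  classical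
  intro t₀ ht₀
  set D := insert (1:ℝ) ((F.erase t₀).image (fun t => |X t - X t₀|)) with hDdef
  have hDne : D.Nonempty := ⟨1, Finset.mem_insert_self _ _⟩
  set ε := D.min' hDne with hε
  have hεpos : 0 < ε := by
    apply lt_of_lt_of_le _ (le_refl ε)
    have : ∀ x ∈ D, 0 < x := by
      intro x hx
      rcases Finset.mem_insert.1 hx with rfl | hx
      · norm_num
      · obtain ⟨t, ht, rfl⟩ := Finset.mem_image.1 hx
        have hne : t ≠ t₀ := (Finset.mem_erase.1 ht).1
        have htF : t ∈ F := (Finset.mem_erase.1 ht).2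
        have : X t ≠ X t₀ := fun h => hne (hinj t htF t₀ ht₀ h)
        exact abs_pos.2 (sub_ne_zero.2 this)
    exact this ε (D.min'_mem hDne)
  have hεle : ∀ t ∈ F, t ≠ t₀ → ε ≤ |X t - X t₀| := by
    intro t ht hne
    exact D.min'_le _
      (Finset.mem_insert_of_mem (Finset.mem_image.2 ⟨t, Finset.mem_erase.2 ⟨hne, ht⟩, rfl⟩))
  have key : ∑ t ∈ F, ν t * (max (X t - (X t₀ - ε)) 0 + max (X t - (X t₀ + ε)) 0
      - 2 * max (X t - X t₀) 0) = 0 := by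
    have h1 := hrel (X t₀ - ε)
    have h2 := hrel (X t₀ + ε)
    have h3 := hrel (X t₀)
    have : ∑ t ∈ F, ν t * (max (X t - (X t₀ - ε)) 0 + max (X t - (X t₀ + ε)) 0
        - 2 * max (X t - X t₀) 0) = (∑ t ∈ F, ν t * max (X t - (X t₀ - ε)) 0)
        + (∑ t ∈ F, ν t * max (X t - (X t₀ + ε)) 0)
        - 2 * (∑ t ∈ F, ν t * max (X t - X t₀) 0) := by
      rw [Finset.mul_sum, ← Finset.sum_add_distrib, ← Finset.sum_sub_distrib]
      congr 1; funext t; ring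
    rw [this, h1, h2, h3]; ring
  have hterm : ∀ t ∈ F, ν t * (max (X t - (X t₀ - ε)) 0 + max (X t - (X t₀ + ε)) 0
      - 2 * max (X t - X t₀) 0) = if t = t₀ then ν t₀ * ε else 0 := by
    intro t ht
    by_cases hteq : t = t₀
    · subst hteq
      simp only [if_pos rfl]
      have e1 : X t - (X t - ε) = ε := by ring
      have e2 : X t - (X t + ε) = -ε := by ring
      rw [e1, e2, sub_self]
      rw [max_eq_left hεpos.le, max_eq_right (by linarith), max_self]
      simp
    · rw [if_neg hteq]
      have habs := hεle t ht hteq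
      rcases lt_or_gt_of_ne (fun h => hteq (hinj t ht t₀ ht₀ h) : X t ≠ X t₀) with hlt | hgt
      · have hle : X t - X t₀ ≤ -ε := by
          have habs' : |X t - X t₀| = -(X t - X t₀) := abs_of_neg (by linarith)
          linarith [habs, habs'.symm.le]
        have m1 : max (X t - (X t₀ - ε)) 0 = 0 := max_eq_right (by linarith)
        have m2 : max (X t - (X t₀ + ε)) 0 = 0 := max_eq_right (by linarith)
        have m3 : max (X t - X t₀) 0 = 0 := max_eq_right (by linarith)
        rw [m1, m2, m3]; ring
      · have hge : ε ≤ X t - X t₀ := by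
          have habs' : |X t - X t₀| = X t - X t₀ := abs_of_pos (by linarith)
          linarith [habs]
        have m1 : max (X t - (X t₀ - ε)) 0 = X t - (X t₀ - ε) := max_eq_left (by linarith)
        have m2 : max (X t - (X t₀ + ε)) 0 = X t - (X t₀ + ε) := max_eq_left (by linarith)
        have m3 : max (X t - X t₀) 0 = X t - X t₀ := max_eq_left (by linarith)
        rw [m1, m2, m3]; ring
  rw [Finset.sum_congr rfl hterm] at key
  rw [Finset.sum_ite_eq' F t₀ (fun _ => ν t₀ * ε)] at key
  rw [if_pos ht₀] at key
  rcases mul_eq_zero.1 key with h | h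
  · exact h
  · exact absurd h (ne_of_gt hεpos)

/-! ### Value function of binary sets -/

private lemma aux_valueFn_pair (a b s : Θ → ℝ) :
    valueFn {a, b} s = max (∑ θ, a θ * s θ) (∑ θ, b θ * s θ) := by
  rw [valueFn, Set.image_pair, csSup_pair]

private lemma aux_measurable_valueFn_pair (a b : Θ → ℝ) :
    Measurable (valueFn ({a, b} : Set (Θ → ℝ))) := by
  have : valueFn ({a, b} : Set (Θ → ℝ)) =
      fun s => max (∑ θ, a θ * s θ) (∑ θ, b θ * s θ) := funext fun s => aux_valueFn_pair a b s
  rw [this]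
  apply Measurable.max <;>
    exact Finset.measurable_sum _ (fun θ _ => (measurable_pi_apply θ).const_mul _)

private lemma aux_binary_pair (a b : Θ → ℝ) : Binary ({a, b} : Set (Θ → ℝ)) := by
  by_cases h : a = b
  · subst h; left; simp [Set.ncard_singleton]
  · right; exact Set.ncard_pair h

/-! ### Finite mixtures of Dirac measures -/

/-- The finite mixture `∑ t ∈ F, w t • δ_t`. -/
private noncomputable def mixDirac (F : Finset (Θ → ℝ)) (w : (Θ → ℝ) → ℝ) : Measure (Θ → ℝ) :=
  ∑ t ∈ F, (ENNReal.ofReal (w t)) • Measure.dirac t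

private lemma mixDirac_apply (F : Finset (Θ → ℝ)) (w : (Θ → ℝ) → ℝ) {s : Set (Θ → ℝ)}
    (hs : MeasurableSet s) :
    mixDirac F w s = ∑ t ∈ F, (ENNReal.ofReal (w t)) * s.indicator 1 t := by
  classical
  rw [mixDirac]
  rw [Measure.finset_sum_apply]
  congr 1; funext t
  rw [Measure.smul_apply, Measure.dirac_apply' _ hs, smul_eq_mul]

private lemma aux_integrable_mixDirac (w : (Θ → ℝ) → ℝ) {f : (Θ → ℝ) → ℝ}
    (hf : Measurable f) (t : Θ → ℝ) :
    Integrable f ((ENNReal.ofReal (w t)) • Measure.dirac t) := by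
  refine ⟨hf.aestronglyMeasurable, ?_⟩
  rw [HasFiniteIntegral]
  rw [lintegral_smul_measure]
  rw [lintegral_dirac' _ (by measurability)]
  exact ENNReal.mul_lt_top ENNReal.ofReal_lt_top (by simp)

private lemma integral_mixDirac (F : Finset (Θ → ℝ)) (w : (Θ → ℝ) → ℝ) (hw : ∀ t ∈ F, 0 ≤ w t)
    {f : (Θ → ℝ) → ℝ} (hf : Measurable f) :
    ∫ t, f t ∂(mixDirac F w) = ∑ t ∈ F, w t * f t := by
  rw [mixDirac, integral_finset_sum_measure (fun t _ => aux_integrable_mixDirac w hf t)]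
  refine Finset.sum_congr rfl fun t ht => ?_
  rw [integral_smul_measure, integral_dirac' _ _ hf.stronglyMeasurable,
    ENNReal.toReal_ofReal (hw t ht)]
  simp

private lemma mixDirac_restrict (F : Finset (Θ → ℝ)) (w : (Θ → ℝ) → ℝ) {S : Set (Θ → ℝ)}
    (hS : MeasurableSet S) (hF : ↑F ⊆ S) :
    (mixDirac F w).restrict S = mixDirac F w := by
  classical
  rw [mixDirac]
  have : (∑ t ∈ F, (ENNReal.ofReal (w t)) • Measure.dirac t).restrict S
      = ∑ t ∈ F, ((ENNReal.ofReal (w t)) • Measure.dirac t).restrict S :=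
    map_sum (Measure.restrictₗ S) _ F
  rw [this]
  refine Finset.sum_congr rfl fun t ht => ?_
  rw [Measure.restrict_smul]
  congr 1
  rw [MeasureTheory.restrict_dirac' hS]
  rw [if_pos (hF ht)]

private lemma setIntegral_mixDirac (F : Finset (Θ → ℝ)) (w : (Θ → ℝ) → ℝ)
    (hw : ∀ t ∈ F, 0 ≤ w t) {S : Set (Θ → ℝ)} (hS : MeasurableSet S) (hF : ↑F ⊆ S)
    {f : (Θ → ℝ) → ℝ} (hf : Measurable f) :
    ∫ t in S, f t ∂(mixDirac F w) = ∑ t ∈ F, w t * f t := by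
  have h : (∫ t in S, f t ∂(mixDirac F w)) = ∫ t, f t ∂((mixDirac F w).restrict S) := rfl
  rw [h, mixDirac_restrict F w hS hF]
  exact integral_mixDirac F w hw hf

private lemma mixDirac_infoStructure (F : Finset (Θ → ℝ)) (w : (Θ → ℝ) → ℝ)
    (hw : ∀ t ∈ F, 0 ≤ w t) (hw1 : ∑ t ∈ F, w t = 1) {S : Set (Θ → ℝ)}
    (hS : MeasurableSet S) (hF : ↑F ⊆ S) :
    IsInfoStructure S (mixDirac F w) := by
  constructor
  · constructor
    rw [mixDirac_apply _ _ MeasurableSet.univ]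
    have : ∀ t ∈ F, (ENNReal.ofReal (w t)) * (Set.univ : Set (Θ → ℝ)).indicator 1 t
        = ENNReal.ofReal (w t) := by
      intro t ht; rw [Set.indicator_of_mem (Set.mem_univ t), Pi.one_apply, mul_one]
    rw [Finset.sum_congr rfl this, ← ENNReal.ofReal_sum_of_nonneg hw, hw1, ENNReal.ofReal_one]
  · rw [mixDirac_apply _ _ hS.compl]
    refine Finset.sum_eq_zero fun t ht => ?_
    rw [Set.indicator_of_notMem (by simpa using hF ht), mul_zero]

private lemma skillDist_mixDirac (F : Finset (Θ → ℝ)) (w : (Θ → ℝ) → ℝ)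
    (hw : ∀ t ∈ F, 0 ≤ w t) {S : Set (Θ → ℝ)} (hS : MeasurableSet S) (hF : ↑F ⊆ S) :
    skillDist S (mixDirac F w) = fun θ => ∑ t ∈ F, w t * t θ := by
  funext θ
  exact setIntegral_mixDirac F w hw hS hF (measurable_pi_apply θ)

/-- Decomposition of a finite measure supported on a finite set. -/
private lemma measure_decomp (π : Measure (Θ → ℝ)) {S : Set (Θ → ℝ)} (hS : MeasurableSet S)
    (hfin : S.Finite) (hcompl : π Sᶜ = 0) [IsFiniteMeasure π] :
    π = mixDirac hfin.toFinset (fun t => (π {t}).toReal) := by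
  classical
  ext s hs
  have h1 : π s = π (s ∩ S) := by
    have h0 := measure_inter_add_diff s hS (μ := π)
    have h2 : π (s \ S) = 0 := measure_mono_null (fun x hx => hx.2) hcompl
    rw [← h0, h2, add_zero]
  have h3 : s ∩ S = ⋃ t ∈ (hfin.toFinset.filter (· ∈ s)), ({t} : Set (Θ → ℝ)) := by
    ext x
    simp only [Set.mem_inter_iff, Set.mem_iUnion, Finset.mem_filter, Set.Finite.mem_toFinset,
      Set.mem_singleton_iff]
    constructor
    · rintro ⟨hxs, hxS⟩; exact ⟨x, ⟨hxS, hxs⟩, rfl⟩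
    · rintro ⟨t, ⟨htS, hts⟩, rfl⟩; exact ⟨hts, htS⟩
  have h4 : π (s ∩ S) = ∑ t ∈ hfin.toFinset.filter (· ∈ s), π {t} := by
    rw [h3]
    rw [measure_biUnion_finset ?_ (fun t _ => measurableSet_singleton t)]
    · intro t ht t' ht' hne
      simp only [Function.onFun, Set.disjoint_singleton_left, Set.mem_singleton_iff]
      exact hne
  rw [h1, h4, mixDirac, Measure.finset_sum_apply]
  rw [Finset.sum_filter]
  refine Finset.sum_congr rfl fun t ht => ?_
  rw [Measure.smul_apply, Measure.dirac_apply' _ hs, smul_eq_mul,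
    ENNReal.ofReal_toReal (measure_ne_top π _)]
  by_cases hts : t ∈ s
  · rw [if_pos hts, Set.indicator_of_mem hts, Pi.one_apply, mul_one]
  · rw [if_neg hts, Set.indicator_of_notMem hts, mul_zero]

end Aux

variable {Θ : Type*} [Fintype Θ] [Nonempty Θ]

private lemma aux_weights_eq {Θ : Type*} [Fintype Θ] (𝒯 : Set (Θ → ℝ))
    (h𝒯 : 𝒯 ⊆ stdSimplex ℝ Θ)
    (h𝒯c : IsClosed 𝒯) (hnd : NonDiscriminatoryBinary 𝒯)
    (F : Finset (Θ → ℝ)) (hF : ↑F ⊆ 𝒯) (w w' : (Θ → ℝ) → ℝ)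
    (hw0 : ∀ t ∈ F, 0 ≤ w t) (hw1 : ∑ t ∈ F, w t = 1)
    (hw0' : ∀ t ∈ F, 0 ≤ w' t) (hw1' : ∑ t ∈ F, w' t = 1)
    (hmean : ∀ θ, ∑ t ∈ F, w t * t θ = ∑ t ∈ F, w' t * t θ) :
    ∀ t ∈ F, w t = w' t := by
  have hS := h𝒯c.measurableSet
  set π := mixDirac F w with hπdef
  set π' := mixDirac F w' with hπ'def
  have hπ := mixDirac_infoStructure F w hw0 hw1 hS hF
  have hπ' := mixDirac_infoStructure F w' hw0' hw1' hS hF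
  have hsk : skillDist 𝒯 π = skillDist 𝒯 π' := by
    rw [hπdef, hπ'def, skillDist_mixDirac F w hw0 hS hF, skillDist_mixDirac F w' hw0' hS hF]
    funext θ; exact hmean θ
  have Hab : ∀ a b : Θ → ℝ, ∑ t ∈ F, w t * max (∑ θ, a θ * t θ) (∑ θ, b θ * t θ)
      = ∑ t ∈ F, w' t * max (∑ θ, a θ * t θ) (∑ θ, b θ * t θ) := by
    intro a b
    have h := hnd π π' hπ hπ' {a, b} (aux_binary_pair a b) hsk
    rw [hπdef, hπ'def, setIntegral_mixDirac F w hw0 hS hF (aux_measurable_valueFn_pair a b),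
        setIntegral_mixDirac F w' hw0' hS hF (aux_measurable_valueFn_pair a b)] at h
    have e : ∀ u : (Θ → ℝ) → ℝ, ∑ t ∈ F, u t * valueFn {a, b} t
        = ∑ t ∈ F, u t * max (∑ θ, a θ * t θ) (∑ θ, b θ * t θ) :=
      fun u => Finset.sum_congr rfl fun t _ => by rw [aux_valueFn_pair]
    rw [e w, e w'] at h; exact h
  obtain ⟨c, hc⟩ := aux_sep_fn F
  set X : (Θ → ℝ) → ℝ := fun t => ∑ θ, c θ * t θ with hX
  have hrel : ∀ r : ℝ, ∑ t ∈ F, (w t - w' t) * max (X t - r) 0 = 0 := by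
    intro r
    have hconv : ∀ t ∈ F, max (∑ θ, (c θ - r) * t θ) (∑ θ, (0 : Θ → ℝ) θ * t θ)
        = max (X t - r) 0 := by
      intro t ht
      have hsum1 : ∑ θ, t θ = 1 := (h𝒯 (hF ht)).2
      have e1 : ∑ θ, (c θ - r) * t θ = X t - r := by
        simp only [hX, sub_mul, Finset.sum_sub_distrib, ← Finset.mul_sum, hsum1, mul_one]
      have e2 : ∑ θ, (0 : Θ → ℝ) θ * t θ = 0 := by simp
      rw [e1, e2]
    have h1 : ∑ t ∈ F, w t * max (X t - r) 0 = ∑ t ∈ F, w' t * max (X t - r) 0 := by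
      calc ∑ t ∈ F, w t * max (X t - r) 0
          = ∑ t ∈ F, w t * max (∑ θ, (c θ - r) * t θ) (∑ θ, (0 : Θ → ℝ) θ * t θ) :=
            Finset.sum_congr rfl fun t ht => by rw [hconv t ht]
        _ = ∑ t ∈ F, w' t * max (∑ θ, (c θ - r) * t θ) (∑ θ, (0 : Θ → ℝ) θ * t θ) :=
            Hab (fun θ => c θ - r) 0
        _ = ∑ t ∈ F, w' t * max (X t - r) 0 :=
            Finset.sum_congr rfl fun t ht => by rw [hconv t ht]
    have h2 : ∑ t ∈ F, (w t - w' t) * max (X t - r) 0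
        = ∑ t ∈ F, w t * max (X t - r) 0 - ∑ t ∈ F, w' t * max (X t - r) 0 := by
      rw [← Finset.sum_sub_distrib]; congr 1; funext t; ring
    rw [h2, h1, sub_self]
  intro t ht
  have := aux_relu_zero F (fun t => w t - w' t) X hc hrel t ht
  linarith

private lemma aux_T_finite {Θ : Type*} [Fintype Θ] (𝒯 : Set (Θ → ℝ))
    (h𝒯 : 𝒯 ⊆ stdSimplex ℝ Θ)
    (h𝒯c : IsClosed 𝒯) (hnd : NonDiscriminatoryBinary 𝒯) : 𝒯.Finite := by
  classical
  by_contra hinf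
  have hinf : 𝒯.Infinite := hinf
  obtain ⟨Fs, hFs𝒯, hFscard⟩ := Set.Infinite.exists_subset_card_eq hinf
    (Fintype.card Θ + 1)
  set F := Fs with hFdef
  -- the family of elements of F is linearly dependent
  have hnli : ¬ LinearIndependent ℝ (fun i : {x // x ∈ F} => (i : Θ → ℝ)) := by
    intro hli
    have hcard := hli.fintype_card_le_finrank
    rw [Module.finrank_pi, Fintype.card_coe, hFscard] at hcard
    omega
  obtain ⟨g, hgsum, i₀, hgi₀⟩ := Fintype.not_linearIndependent_iff.1 hnli
  set ν : (Θ → ℝ) → ℝ := fun t => if h : t ∈ F then g ⟨t, h⟩ else 0 with hν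
  have hν0 : ∀ θ, ∑ t ∈ F, ν t * t θ = 0 := by
    intro θ
    have h1 : ∑ t ∈ F, ν t * t θ = ∑ i : {x // x ∈ F}, g i * (i : Θ → ℝ) θ := by
      rw [← Finset.sum_coe_sort F (fun t => ν t * t θ)]
      refine Finset.sum_congr rfl fun i _ => ?_
      simp only [hν]; rw [dif_pos i.2]
    rw [h1]
    have := congrFun hgsum θ
    simpa using this
  have hνsum : ∑ t ∈ F, ν t = 0 := by
    have : ∑ t ∈ F, ν t = ∑ t ∈ F, ν t * ∑ θ, t θ := by
      refine Finset.sum_congr rfl fun t ht => ?_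
      rw [(h𝒯 (hFs𝒯 ht)).2, mul_one]
    rw [this]
    have e : ∑ t ∈ F, ν t * ∑ θ, t θ = ∑ θ, ∑ t ∈ F, ν t * t θ := by
      rw [Finset.sum_comm]
      exact Finset.sum_congr rfl fun t _ => Finset.mul_sum _ _ _
    rw [e]
    exact Finset.sum_eq_zero fun θ _ => hν0 θ
  set S := ∑ t ∈ F, max (ν t) 0 with hSdef
  have hdecomp : ∀ t, ν t = max (ν t) 0 - max (-ν t) 0 := by
    intro t
    rcases le_total (ν t) 0 with h | h
    · rw [max_eq_right h, max_eq_left (by linarith)]; ring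
    · rw [max_eq_left h, max_eq_right (by linarith)]; ring
  have hS' : ∑ t ∈ F, max (-ν t) 0 = S := by
    have : ∑ t ∈ F, ν t = ∑ t ∈ F, (max (ν t) 0 - max (-ν t) 0) :=
      Finset.sum_congr rfl fun t _ => hdecomp t
    rw [Finset.sum_sub_distrib] at this
    rw [hνsum] at this
    rw [hSdef]; linarith
  have hSpos : 0 < S := by
    rcases lt_or_eq_of_le (Finset.sum_nonneg (fun t (_ : t ∈ F) => le_max_right (ν t) 0)) with h | h
    · exact h
    · exfalso
      have hz : ∀ t ∈ F, max (ν t) 0 = 0 :=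
        (Finset.sum_eq_zero_iff_of_nonneg (fun t _ => le_max_right (ν t) 0)).1 h.symm
      have hz' : ∀ t ∈ F, max (-ν t) 0 = 0 := by
        have : ∑ t ∈ F, max (-ν t) 0 = 0 := by rw [hS', hSdef, ← h]
        exact (Finset.sum_eq_zero_iff_of_nonneg (fun t _ => le_max_right (-ν t) 0)).1 this
      apply hgi₀
      have : ν (i₀ : Θ → ℝ) = 0 := by
        rw [hdecomp, hz _ i₀.2, hz' _ i₀.2, sub_zero]
      simp only [hν] at this
      rwa [dif_pos i₀.2] at this
  set w : (Θ → ℝ) → ℝ := fun t => max (ν t) 0 / S with hw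
  set w' : (Θ → ℝ) → ℝ := fun t => max (-ν t) 0 / S with hw'
  have heq := aux_weights_eq 𝒯 h𝒯 h𝒯c hnd F hFs𝒯 w w'
    (fun t _ => div_nonneg (le_max_right _ _) hSpos.le)
    (by simp only [hw]; rw [← Finset.sum_div, ← hSdef, div_self (ne_of_gt hSpos)])
    (fun t _ => div_nonneg (le_max_right _ _) hSpos.le)
    (by simp only [hw']; rw [← Finset.sum_div, hS', div_self (ne_of_gt hSpos)])
    (by
      intro θ
      simp only [hw, hw']
      have e : ∀ u : (Θ → ℝ) → ℝ, ∑ t ∈ F, u t / S * t θ = (∑ t ∈ F, u t * t θ) / S := by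
        intro u; rw [Finset.sum_div]; exact Finset.sum_congr rfl fun t _ => by ring
      rw [e (fun t => max (ν t) 0), e (fun t => max (-ν t) 0)]
      congr 1
      have : ∑ t ∈ F, max (ν t) 0 * t θ - ∑ t ∈ F, max (-ν t) 0 * t θ
          = ∑ t ∈ F, ν t * t θ := by
        rw [← Finset.sum_sub_distrib]
        refine Finset.sum_congr rfl fun t _ => ?_
        conv_rhs => rw [hdecomp t]
        ring
      rw [hν0 θ] at this
      linarith)
  apply hgi₀
  have h1 := heq (i₀ : Θ → ℝ) i₀.2
  simp only [hw, hw'] at h1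
  have h2 : max (ν (i₀ : Θ → ℝ)) 0 = max (-ν (i₀ : Θ → ℝ)) 0 := by
    field_simp [hSpos.ne'] at h1
    exact h1
  have h3 : ν (i₀ : Θ → ℝ) = 0 := by
    have h4 := hdecomp (i₀ : Θ → ℝ)
    rw [h2] at h4
    simpa using h4
  simp only [hν] at h3
  rwa [dif_pos i₀.2] at h3

theorem stmt4 (𝒯 : Set (Θ → ℝ)) (h𝒯 : 𝒯 ⊆ stdSimplex ℝ Θ) (h𝒯c : IsClosed 𝒯)
    (hnd : NonDiscriminatoryBinary 𝒯) : Identified 𝒯 := by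
  classical
  intro π π' hπ hπ' hsk
  have hS := h𝒯c.measurableSet
  have hfin := aux_T_finite 𝒯 h𝒯 h𝒯c hnd
  set F := hfin.toFinset with hFdef
  have hF𝒯 : ↑F ⊆ 𝒯 := by rw [hFdef]; simp
  haveI := hπ.1
  haveI := hπ'.1
  set w : (Θ → ℝ) → ℝ := fun t => (π {t}).toReal with hwdef
  set w' : (Θ → ℝ) → ℝ := fun t => (π' {t}).toReal with hw'def
  have hdec : π = mixDirac F w := measure_decomp π hS hfin hπ.2
  have hdec' : π' = mixDirac F w' := measure_decomp π' hS hfin hπ'.2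
  have hw0 : ∀ t ∈ F, 0 ≤ w t := fun t _ => ENNReal.toReal_nonneg
  have hw0' : ∀ t ∈ F, 0 ≤ w' t := fun t _ => ENNReal.toReal_nonneg
  have hsum : ∀ (ρ : Measure (Θ → ℝ)) (u : (Θ → ℝ) → ℝ), ρ = mixDirac F u →
      IsProbabilityMeasure ρ → (∀ t ∈ F, 0 ≤ u t) → ∑ t ∈ F, u t = 1 := by
    intro ρ u hρ hprob hu0
    have h1 : ρ Set.univ = 1 := hprob.measure_univ
    rw [hρ, mixDirac_apply _ _ MeasurableSet.univ] at h1
    have h2 : ∀ t ∈ F, (ENNReal.ofReal (u t)) * (Set.univ : Set (Θ → ℝ)).indicator 1 t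
        = ENNReal.ofReal (u t) := by
      intro t ht; rw [Set.indicator_of_mem (Set.mem_univ t), Pi.one_apply, mul_one]
    rw [Finset.sum_congr rfl h2, ← ENNReal.ofReal_sum_of_nonneg hu0] at h1
    have := congrArg ENNReal.toReal h1
    rwa [ENNReal.toReal_ofReal (Finset.sum_nonneg hu0), ENNReal.toReal_one] at this
  have hw1 : ∑ t ∈ F, w t = 1 := hsum π w hdec hπ.1 hw0
  have hw1' : ∑ t ∈ F, w' t = 1 := hsum π' w' hdec' hπ'.1 hw0'
  have hmean : ∀ θ, ∑ t ∈ F, w t * t θ = ∑ t ∈ F, w' t * t θ := by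
    intro θ
    have h1 := congrFun hsk θ
    rw [show skillDist 𝒯 π θ = ∑ t ∈ F, w t * t θ by
          rw [hdec]; exact congrFun (skillDist_mixDirac F w hw0 hS hF𝒯) θ,
        show skillDist 𝒯 π' θ = ∑ t ∈ F, w' t * t θ by
          rw [hdec']; exact congrFun (skillDist_mixDirac F w' hw0' hS hF𝒯) θ] at h1
    exact h1
  have heq := aux_weights_eq 𝒯 h𝒯 h𝒯c hnd F hF𝒯 w w' hw0 hw1 hw0' hw1' hmean
  rw [hdec, hdec']
  unfold mixDirac
  exact Finset.sum_congr rfl fun t ht => by rw [heq t ht]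
end

section
/- If ∂T is identified (i.e., any two Borel probability measures on ∂T with the same barycenter are equal), then for every finite nonempty A ⊆ ℝ^Θ the function W_A is affine on T. -/
open MeasureTheory Set

section MyAux
variable {Θ : Type*} [Fintype Θ]

lemma valueFn_eq_sup' {A : Set (Θ → ℝ)} (hA : A.Finite) (hne : A.Nonempty) (s : Θ → ℝ) :
    valueFn A s = hA.toFinset.sup' (by simpa using hne) (fun a => ∑ θ, a θ * s θ) := by
  rw [Finset.sup'_eq_csSup_image, valueFn, Finite.coe_toFinset]

lemma valueFn_continuous {A : Set (Θ → ℝ)} (hA : A.Finite) (hne : A.Nonempty) :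
    Continuous (valueFn A) := by
  have h : Continuous fun s : Θ → ℝ =>
      hA.toFinset.sup' (by simpa using hne) (fun a => ∑ θ, a θ * s θ) := by
    apply Continuous.finset_sup'_apply (f := fun (a : Θ → ℝ) (s : Θ → ℝ) => ∑ θ, a θ * s θ)
      (by simpa using hne)
    intro a _
    exact continuous_finset_sum _ fun θ _ => (continuous_const.mul (continuous_apply θ))
  convert h using 1
  ext s
  exact valueFn_eq_sup' hA hne s

lemma exists_valueFn_eq {A : Set (Θ → ℝ)} (hA : A.Finite) (hne : A.Nonempty) (s : Θ → ℝ) :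
    ∃ a ∈ A, valueFn A s = ∑ θ, a θ * s θ := by
  have h := Set.Nonempty.csSup_mem (hne.image (fun a => ∑ θ, a θ * s θ)) (hA.image _)
  obtain ⟨a, ha, h⟩ := h
  exact ⟨a, ha, h.symm⟩

lemma le_valueFn {A : Set (Θ → ℝ)} (hA : A.Finite) {a : Θ → ℝ} (ha : a ∈ A) (s : Θ → ℝ) :
    ∑ θ, a θ * s θ ≤ valueFn A s :=
  le_csSup ((hA.image _).bddAbove) (mem_image_of_mem _ ha)

lemma valueFn_convexOn {A : Set (Θ → ℝ)} (hA : A.Finite) (hne : A.Nonempty) :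
    ConvexOn ℝ univ (valueFn A) := by
  refine ⟨convex_univ, fun x _ y _ γ δ hγ hδ hγδ => ?_⟩
  obtain ⟨a, ha, hEq⟩ := exists_valueFn_eq hA hne (γ • x + δ • y)
  rw [hEq]
  have hsplit : ∑ θ, a θ * (γ • x + δ • y) θ
      = γ * ∑ θ, a θ * x θ + δ * ∑ θ, a θ * y θ := by
    simp only [Pi.add_apply, Pi.smul_apply, smul_eq_mul, Finset.mul_sum,
      ← Finset.sum_add_distrib]
    apply Finset.sum_congr rfl; intro θ _; ring
  rw [hsplit]
  have h1 := le_valueFn hA ha x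
  have h2 := le_valueFn hA ha y
  have := add_le_add (mul_le_mul_of_nonneg_left h1 hγ) (mul_le_mul_of_nonneg_left h2 hδ)
  simpa [smul_eq_mul] using this

/-- Finite combination of Dirac measures. -/
noncomputable def diracComb (F : Finset (Θ → ℝ)) (w : (Θ → ℝ) → ℝ) : Measure (Θ → ℝ) :=
  ∑ y ∈ F, ENNReal.ofReal (w y) • Measure.dirac y

lemma diracComb_apply (F : Finset (Θ → ℝ)) (w : (Θ → ℝ) → ℝ) (s : Set (Θ → ℝ)) :
    diracComb F w s = ∑ y ∈ F, ENNReal.ofReal (w y) * s.indicator 1 y := by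
  rw [diracComb, Measure.finset_sum_apply]
  exact Finset.sum_congr rfl fun y _ => by rw [Measure.smul_apply, Measure.dirac_apply,
    smul_eq_mul]

lemma diracComb_isProbability (F : Finset (Θ → ℝ)) (w : (Θ → ℝ) → ℝ)
    (hw0 : ∀ y ∈ F, 0 ≤ w y) (hw1 : ∑ y ∈ F, w y = 1) :
    IsProbabilityMeasure (diracComb F w) := by
  constructor
  rw [diracComb_apply]
  simp only [indicator_of_mem (mem_univ _), Pi.one_apply, mul_one]
  rw [← ENNReal.ofReal_sum_of_nonneg hw0, hw1, ENNReal.ofReal_one]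

lemma diracComb_compl (F : Finset (Θ → ℝ)) (w : (Θ → ℝ) → ℝ) {S : Set (Θ → ℝ)}
    (hFS : ↑F ⊆ S) : diracComb F w Sᶜ = 0 := by
  rw [diracComb_apply]
  apply Finset.sum_eq_zero
  intro y hy
  rw [indicator_of_notMem (by simpa using hFS hy), mul_zero]

lemma diracComb_restrict (F : Finset (Θ → ℝ)) (w : (Θ → ℝ) → ℝ) {S : Set (Θ → ℝ)}
    (hFS : ↑F ⊆ S) : (diracComb F w).restrict S = diracComb F w :=
  Measure.restrict_eq_self_of_ae_mem (ae_iff.mpr (diracComb_compl F w hFS))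

lemma diracComb_integral (F : Finset (Θ → ℝ)) (w : (Θ → ℝ) → ℝ) {S : Set (Θ → ℝ)}
    (hFS : ↑F ⊆ S) {f : (Θ → ℝ) → ℝ} (hf : Continuous f) (hw0 : ∀ y ∈ F, 0 ≤ w y) :
    ∫ t in S, f t ∂(diracComb F w) = ∑ y ∈ F, w y * f y := by
  rw [diracComb_restrict F w hFS, diracComb, integral_finset_sum_measure]
  · refine Finset.sum_congr rfl fun y hy => ?_
    rw [integral_smul_measure, integral_dirac, smul_eq_mul, ENNReal.toReal_ofReal (hw0 y hy)]
  · intro y _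
    refine Integrable.smul_measure ⟨hf.aestronglyMeasurable, ?_⟩ (by simp)
    rw [HasFiniteIntegral, lintegral_dirac]
    exact ENNReal.coe_lt_top

lemma diracComb_skillDist (F : Finset (Θ → ℝ)) (w : (Θ → ℝ) → ℝ) {S : Set (Θ → ℝ)}
    (hFS : ↑F ⊆ S) (hw0 : ∀ y ∈ F, 0 ≤ w y) (θ : Θ) :
    skillDist S (diracComb F w) θ = ∑ y ∈ F, w y * y θ :=
  diracComb_integral F w hFS (continuous_apply θ) hw0

lemma diracComb_infoStructure (F : Finset (Θ → ℝ)) (w : (Θ → ℝ) → ℝ) {S : Set (Θ → ℝ)}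
    (hFS : ↑F ⊆ S) (hw0 : ∀ y ∈ F, 0 ≤ w y) (hw1 : ∑ y ∈ F, w y = 1) :
    IsInfoStructure S (diracComb F w) :=
  ⟨diracComb_isProbability F w hw0 hw1, diracComb_compl F w hFS⟩

open Classical in
/-- The extension of `g : ↥S → ℝ` to the ambient space. -/
noncomputable def extFn (S : Set (Θ → ℝ)) (I : Finset ↥S) (g : ↥S → ℝ) : (Θ → ℝ) → ℝ :=
  fun y => if h : y ∈ S then (if ⟨y, h⟩ ∈ I then g ⟨y, h⟩ else 0) else 0

lemma extFn_coe {S : Set (Θ → ℝ)} {I : Finset ↥S} (g : ↥S → ℝ) {i : ↥S} (hi : i ∈ I) :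
    extFn S I g (i : Θ → ℝ) = g i := by
  simp only [extFn, dif_pos i.2, Subtype.coe_eta, if_pos hi]

/-- KEY: identified sets have "homogenized" linearly independent points. -/
lemma identified_linearIndependent {S : Set (Θ → ℝ)} (hid : Identified S) :
    LinearIndependent ℝ (fun s : S => ((s : Θ → ℝ), (1 : ℝ))) := by
  rw [linearIndependent_iff']
  intro I g hsum i₀ hi₀
  have h1 : ∑ i ∈ I, g i • (i : Θ → ℝ) = 0 := by
    have := congrArg (LinearMap.fst ℝ (Θ → ℝ) ℝ) hsum
    simpa [map_sum] using this
  have h2 : ∑ i ∈ I, g i = 0 := by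
    have := congrArg (LinearMap.snd ℝ (Θ → ℝ) ℝ) hsum
    simpa [map_sum] using this
  set gp : ↥S → ℝ := fun i => max (g i) 0 with hgp
  set gm : ↥S → ℝ := fun i => max (-(g i)) 0 with hgm
  have hgdiff : ∀ i, gp i - gm i = g i := fun i => max_zero_sub_max_neg_zero_eq_self (g i)
  set m : ℝ := ∑ i ∈ I, gp i with hm
  have hpnn : ∀ i, 0 ≤ gp i := fun i => le_max_right _ _
  have hmnn : ∀ i, 0 ≤ gm i := fun i => le_max_right _ _
  have hmsum : ∑ i ∈ I, gm i = m := by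
    have : ∑ i ∈ I, (gp i - gm i) = 0 := by simp only [hgdiff]; exact h2
    rw [Finset.sum_sub_distrib] at this
    linarith
  rcases eq_or_ne m 0 with hm0 | hm0
  · -- all gp, gm vanish
    have hp0 : ∀ i ∈ I, gp i = 0 := by
      intro i hi
      exact (Finset.sum_eq_zero_iff_of_nonneg (fun j _ => hpnn j)).1 hm0 i hi
    have hq0 : ∀ i ∈ I, gm i = 0 := by
      intro i hi
      exact (Finset.sum_eq_zero_iff_of_nonneg (fun j _ => hmnn j)).1 (hmsum.trans hm0) i hi
    have := hgdiff i₀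
    rw [hp0 i₀ hi₀, hq0 i₀ hi₀] at this
    linarith
  · have hmpos : 0 < m := lt_of_le_of_ne (Finset.sum_nonneg fun i _ => hpnn i) (Ne.symm hm0)
    set F : Finset (Θ → ℝ) := I.image (fun i : ↥S => (i : Θ → ℝ)) with hF
    have hinj : Set.InjOn (fun i : ↥S => (i : Θ → ℝ)) ↑I := fun a _ b _ h => Subtype.ext h
    have hFS : ↑F ⊆ S := by
      intro y hy
      simp only [hF, Finset.coe_image, mem_image] at hy
      obtain ⟨i, _, rfl⟩ := hy
      exact i.2
    set wp : (Θ → ℝ) → ℝ := fun y => extFn S I gp y / m with hwp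
    set wm : (Θ → ℝ) → ℝ := fun y => extFn S I gm y / m with hwm
    have hsum_img : ∀ (u : ↥S → ℝ) (f : (Θ → ℝ) → ℝ),
        ∑ y ∈ F, f y * (extFn S I u y / m) = ∑ i ∈ I, f (i : Θ → ℝ) * (u i / m) := by
      intro u f
      rw [hF, Finset.sum_image (fun a ha b hb h => hinj ha hb h)]
      exact Finset.sum_congr rfl fun i hi => by rw [extFn_coe u hi]
    have hwp0 : ∀ y ∈ F, 0 ≤ wp y := by
      intro y hy
      apply div_nonneg _ hmpos.le
      unfold extFn; split_ifs <;> first | exact hpnn _ | exact le_rfl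
    have hwm0 : ∀ y ∈ F, 0 ≤ wm y := by
      intro y hy
      apply div_nonneg _ hmpos.le
      unfold extFn; split_ifs <;> first | exact hmnn _ | exact le_rfl
    have hwp1 : ∑ y ∈ F, wp y = 1 := by
      have h := hsum_img gp (fun _ => 1)
      simp only [one_mul] at h
      calc ∑ y ∈ F, wp y = ∑ i ∈ I, gp i / m := by simp only [hwp]; exact h
        _ = 1 := by rw [← Finset.sum_div, ← hm, div_self hm0]
    have hwm1 : ∑ y ∈ F, wm y = 1 := by
      have h := hsum_img gm (fun _ => 1)
      simp only [one_mul] at h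
      calc ∑ y ∈ F, wm y = ∑ i ∈ I, gm i / m := by simp only [hwm]; exact h
        _ = 1 := by rw [← Finset.sum_div, hmsum, div_self hm0]
    have hπ := diracComb_infoStructure F wp hFS hwp0 hwp1
    have hπ' := diracComb_infoStructure F wm hFS hwm0 hwm1
    have hskill : skillDist S (diracComb F wp) = skillDist S (diracComb F wm) := by
      funext θ
      rw [diracComb_skillDist F wp hFS hwp0 θ, diracComb_skillDist F wm hFS hwm0 θ]
      have h1θ : ∑ i ∈ I, g i * (i : Θ → ℝ) θ = 0 := by
        have := congrFun h1 θ
        simpa [Finset.sum_apply] using this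
      have hp := hsum_img gp (fun y => y θ)
      have hq := hsum_img gm (fun y => y θ)
      calc ∑ y ∈ F, wp y * y θ = ∑ y ∈ F, y θ * (extFn S I gp y / m) := by
            simp only [hwp]; exact Finset.sum_congr rfl fun y _ => mul_comm _ _
        _ = ∑ i ∈ I, (i : Θ → ℝ) θ * (gp i / m) := hp
        _ = ∑ i ∈ I, (i : Θ → ℝ) θ * (gm i / m) := by
            rw [← sub_eq_zero, ← Finset.sum_sub_distrib]
            have : ∀ i ∈ I, (i : Θ → ℝ) θ * (gp i / m) - (i : Θ → ℝ) θ * (gm i / m)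
                = (g i * (i : Θ → ℝ) θ) / m := by
              intro i _
              rw [← hgdiff i]; ring
            rw [Finset.sum_congr rfl this, ← Finset.sum_div, h1θ, zero_div]
        _ = ∑ y ∈ F, y θ * (extFn S I gm y / m) := hq.symm
        _ = ∑ y ∈ F, wm y * y θ := by
            simp only [hwm]; exact Finset.sum_congr rfl fun y _ => mul_comm _ _
    have heq := hid _ _ hπ hπ' hskill
    have hxF : (i₀ : Θ → ℝ) ∈ F := Finset.mem_image_of_mem _ hi₀
    have hsingle : ∀ w' : (Θ → ℝ) → ℝ,
        ∑ y ∈ F, ENNReal.ofReal (w' y) * ({(i₀ : Θ → ℝ)} : Set (Θ → ℝ)).indicator 1 y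
          = ENNReal.ofReal (w' (i₀ : Θ → ℝ)) := by
      intro w'
      rw [Finset.sum_eq_single ((i₀ : Θ → ℝ))]
      · simp
      · intro y _ hne
        rw [indicator_of_notMem (by simpa using hne), mul_zero]
      · intro h; exact absurd hxF h
    have hx : diracComb F wp {(i₀ : Θ → ℝ)} = diracComb F wm {(i₀ : Θ → ℝ)} := by rw [heq]
    rw [diracComb_apply, diracComb_apply, hsingle wp, hsingle wm] at hx
    have hww : wp (i₀ : Θ → ℝ) = wm (i₀ : Θ → ℝ) := by
      rwa [ENNReal.ofReal_eq_ofReal_iff (hwp0 _ hxF) (hwm0 _ hxF)] at hx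
    have hgg : gp i₀ = gm i₀ := by
      have : extFn S I gp (i₀ : Θ → ℝ) / m = extFn S I gm (i₀ : Θ → ℝ) / m := hww
      rw [extFn_coe gp hi₀, extFn_coe gm hi₀] at this
      field_simp at this
      exact this
    have := hgdiff i₀
    rw [hgg] at this
    linarith


lemma li_finite {S : Set (Θ → ℝ)}
    (hli : LinearIndependent ℝ (fun s : S => ((s : Θ → ℝ), (1 : ℝ)))) : S.Finite := by
  have : Finite ↥S := hli.finite
  exact Set.toFinite S

lemma li_interp {S : Set (Θ → ℝ)}
    (hli : LinearIndependent ℝ (fun s : S => ((s : Θ → ℝ), (1 : ℝ)))) (f : (Θ → ℝ) → ℝ) :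
    ∃ (α : Θ → ℝ) (c : ℝ), ∀ s ∈ S, f s = ∑ θ, α θ * s θ + c := by
  classical
  set v : ↥S → (Θ → ℝ) × ℝ := fun s => ((s : Θ → ℝ), (1 : ℝ)) with hv
  set R : Set ((Θ → ℝ) × ℝ) := Set.range v with hR
  have hli' : LinearIndepOn ℝ id R := hli.linearIndepOn_id
  set b := Module.Basis.extend hli' with hb
  set φ : ((Θ → ℝ) × ℝ) →ₗ[ℝ] ℝ := b.constr ℝ (fun x => f (x : (Θ → ℝ) × ℝ).1) with hφ
  have hphi : ∀ s ∈ S, φ ((s : Θ → ℝ), (1 : ℝ)) = f s := by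
    intro s hs
    have hmem : ((s : Θ → ℝ), (1 : ℝ)) ∈ hli'.extend (Set.subset_univ R) :=
      hli'.subset_extend _ ⟨⟨s, hs⟩, rfl⟩
    have h1 : φ (b ⟨_, hmem⟩) = f (((s : Θ → ℝ), (1:ℝ)) : (Θ → ℝ) × ℝ).1 := by
      rw [hφ, Module.Basis.constr_basis]
    rwa [Module.Basis.extend_apply_self] at h1
  set ψ : (Θ → ℝ) →ₗ[ℝ] ℝ := φ.comp (LinearMap.inl ℝ (Θ → ℝ) ℝ) with hψ
  refine ⟨fun θ => ψ (Pi.single θ 1), φ (0, 1), fun s hs => ?_⟩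
  have hsplit : ((s : Θ → ℝ), (1 : ℝ)) = ((s : Θ → ℝ), (0:ℝ)) + ((0 : Θ → ℝ), (1:ℝ)) := by
    simp
  rw [← hphi s hs, hsplit, map_add]
  congr 1
  have := LinearMap.pi_apply_eq_sum_univ ψ s
  have h2 : φ (s, (0:ℝ)) = ψ s := rfl
  rw [h2, this]
  refine Finset.sum_congr rfl fun θ _ => ?_
  rw [smul_eq_mul, mul_comm]
  congr 1
  congr 1
  funext j
  simp [Pi.single_apply, eq_comm]


lemma affine_setIntegral {T : Set (Θ → ℝ)} (hTm : MeasurableSet T) (hTcomp : IsCompact T)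
    {π : Measure (Θ → ℝ)} (hπp : IsProbabilityMeasure π) (hπc : π Tᶜ = 0)
    (α : Θ → ℝ) (c : ℝ) :
    ∫ t in T, (∑ θ, α θ * t θ + c) ∂π = ∑ θ, α θ * skillDist T π θ + c := by
  haveI := hπp
  have hTone : π T = 1 := by
    have : T =ᵐ[π] (Set.univ : Set (Θ → ℝ)) := ae_eq_univ.2 hπc
    rw [measure_congr this, measure_univ]
  have hint : ∀ θ, IntegrableOn (fun t : Θ → ℝ => t θ) T π := fun θ =>
    (continuous_apply θ).continuousOn.integrableOn_compact hTcomp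
  have hintsum : IntegrableOn (fun t : Θ → ℝ => ∑ θ, α θ * t θ) T π := by
    apply integrable_finset_sum
    intro θ _
    exact (hint θ).const_mul _
  rw [integral_add hintsum (integrableOn_const (by rw [hTone]; exact ENNReal.one_ne_top))]
  congr 1
  · rw [integral_finset_sum _ (fun θ _ => (hint θ).const_mul _)]
    exact Finset.sum_congr rfl fun θ _ => integral_const_mul _ _
  · rw [setIntegral_const, measureReal_def, hTone, ENNReal.toReal_one, one_smul]



end MyAux

variable {Θ : Type*} [Fintype Θ] [Nonempty Θ]

theorem stmt10 (𝒯 : Set (Θ → ℝ)) (h𝒯 : 𝒯 ⊆ stdSimplex ℝ Θ) (h𝒯c : IsClosed 𝒯)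
    (hid : Identified (Set.extremePoints ℝ (closure (convexHull ℝ 𝒯)))) :
    ∀ A : Set (Θ → ℝ), A.Finite → A.Nonempty →
      AffineOnSet (Wfn A (closure (convexHull ℝ 𝒯))) (closure (convexHull ℝ 𝒯)) := by
  intro A hAfin hAne
  set T : Set (Θ → ℝ) := closure (convexHull ℝ 𝒯) with hT
  have hTsub : T ⊆ stdSimplex ℝ Θ :=
    closure_minimal (convexHull_min h𝒯 (convex_stdSimplex ℝ Θ)) (isCompact_stdSimplex ℝ Θ).isClosed
  have hTcomp : IsCompact T := (isCompact_stdSimplex ℝ Θ).of_isClosed_subset isClosed_closure hTsub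
  have hTconv : Convex ℝ T := (convex_convexHull ℝ 𝒯).closure
  have hTm : MeasurableSet T := isClosed_closure.measurableSet
  set S : Set (Θ → ℝ) := Set.extremePoints ℝ T with hS
  have hSsub : S ⊆ T := extremePoints_subset
  have hli := identified_linearIndependent hid
  have hSfin : S.Finite := li_finite hli
  set F : Finset (Θ → ℝ) := hSfin.toFinset with hFdef
  have hFcoe : (F : Set (Θ → ℝ)) = S := hSfin.coe_toFinset
  have hFS : (F : Set (Θ → ℝ)) ⊆ T := hFcoe ▸ hSsub
  have hKM : convexHull ℝ (F : Set (Θ → ℝ)) = T := by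
    have h1 : closure (convexHull ℝ S) = T := closure_convexHull_extremePoints hTcomp hTconv
    rw [hFcoe, ← h1]
    exact ((hSfin.isCompact_convexHull ℝ).isClosed.closure_eq).symm
  obtain ⟨α, c, hinterp⟩ := li_interp hli (valueFn A)
  set g : (Θ → ℝ) → ℝ := fun t => ∑ θ, α θ * t θ + c with hg
  -- affine combination identity for g
  have hgcomb : ∀ (w : (Θ → ℝ) → ℝ) (t : Θ → ℝ), (∑ y ∈ F, w y = 1) →
      (∑ y ∈ F, w y • y = t) → ∑ y ∈ F, w y * g y = g t := by
    intro w t hw1 hwt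
    have htθ : ∀ θ, t θ = ∑ y ∈ F, w y * y θ := by
      intro θ
      rw [← hwt]
      simp [Finset.sum_apply]
    simp only [hg]
    calc ∑ y ∈ F, w y * (∑ θ, α θ * y θ + c)
        = ∑ y ∈ F, ((∑ θ, w y * (α θ * y θ)) + w y * c) := by
          refine Finset.sum_congr rfl fun y _ => ?_
          rw [mul_add, Finset.mul_sum]
      _ = (∑ y ∈ F, ∑ θ, w y * (α θ * y θ)) + ∑ y ∈ F, w y * c := Finset.sum_add_distrib
      _ = (∑ θ, ∑ y ∈ F, w y * (α θ * y θ)) + c := by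
          rw [Finset.sum_comm, ← Finset.sum_mul, hw1, one_mul]
      _ = ∑ θ, α θ * t θ + c := by
          congr 1
          refine Finset.sum_congr rfl fun θ _ => ?_
          rw [htθ θ, Finset.mul_sum]
          refine Finset.sum_congr rfl fun y _ => by ring
  have hgF : ∀ y ∈ F, valueFn A y = g y := by
    intro y hy
    exact hinterp y (hFcoe ▸ hy : y ∈ S)
  -- domination of valueFn by g on T
  have hdom : ∀ t ∈ T, valueFn A t ≤ g t := by
    intro t ht
    rw [← hKM] at ht
    obtain ⟨w, hw0, hw1, hwt⟩ := Finset.mem_convexHull'.1 ht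
    calc valueFn A t = valueFn A (∑ y ∈ F, w y • y) := by rw [hwt]
      _ ≤ ∑ y ∈ F, w y • valueFn A y :=
          (valueFn_convexOn hAfin hAne).map_sum_le hw0 hw1 (fun _ _ => Set.mem_univ _)
      _ = ∑ y ∈ F, w y * g y := by
          refine Finset.sum_congr rfl fun y hy => ?_
          rw [smul_eq_mul, hgF y hy]
      _ = g t := hgcomb w t hw1 hwt
  -- W_A = g on T
  have hWeq : ∀ p ∈ T, Wfn A T p = g p := by
    intro p hp
    have hub : ∀ x ∈ {x | ∃ π : Measure (Θ → ℝ), IsInfoStructure T π ∧ skillDist T π = p ∧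
        x = ∫ t in T, valueFn A t ∂π}, x ≤ g p := by
      rintro x ⟨π, ⟨hπp, hπc⟩, hπs, rfl⟩
      haveI := hπp
      have hi1 : IntegrableOn (valueFn A) T π :=
        (valueFn_continuous hAfin hAne).continuousOn.integrableOn_compact hTcomp
      have hi2 : IntegrableOn g T π := by
        have : Continuous g := by
          apply Continuous.add _ continuous_const
          exact continuous_finset_sum _ fun θ _ => continuous_const.mul (continuous_apply θ)
        exact this.continuousOn.integrableOn_compact hTcomp
      calc ∫ t in T, valueFn A t ∂π ≤ ∫ t in T, g t ∂π :=
            setIntegral_mono_on hi1 hi2 hTm (fun t ht => hdom t ht)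
        _ = ∑ θ, α θ * skillDist T π θ + c := affine_setIntegral hTm hTcomp hπp hπc α c
        _ = g p := by rw [hπs]
    -- witness
    obtain ⟨w, hw0, hw1, hwt⟩ := Finset.mem_convexHull'.1 (hKM ▸ hp)
    have hmem : g p ∈ {x | ∃ π : Measure (Θ → ℝ), IsInfoStructure T π ∧ skillDist T π = p ∧
        x = ∫ t in T, valueFn A t ∂π} := by
      refine ⟨diracComb F w, diracComb_infoStructure F w hFS hw0 hw1, ?_, ?_⟩
      · funext θ
        rw [diracComb_skillDist F w hFS hw0 θ]
        simpa [Finset.sum_apply] using congrFun hwt θ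
      · rw [diracComb_integral F w hFS (valueFn_continuous hAfin hAne) hw0]
        rw [Finset.sum_congr rfl (fun y hy => by rw [hgF y hy]), hgcomb w p hw1 hwt]
    exact le_antisymm (csSup_le ⟨g p, hmem⟩ hub) (le_csSup ⟨g p, hub⟩ hmem)
  -- conclude affinity
  intro p hp q hq γ hγ0 hγ1
  have hcomboT : γ • p + (1 - γ) • q ∈ T := hTconv hp hq hγ0 (by linarith) (by ring)
  rw [hWeq _ hcomboT, hWeq _ hp, hWeq _ hq]
  simp only [hg, Pi.add_apply, Pi.smul_apply, smul_eq_mul]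
  have : ∑ θ, α θ * (γ * p θ + (1 - γ) * q θ)
      = γ * ∑ θ, α θ * p θ + (1 - γ) * ∑ θ, α θ * q θ := by
    rw [Finset.mul_sum, Finset.mul_sum, ← Finset.sum_add_distrib]
    refine Finset.sum_congr rfl fun θ _ => by ring
  rw [this]
  ring
end
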